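/- arXiv:2207.07323 — 3 statements merged into one kernel-verified Lean document; each statement's English description precedes it below -/
import Mathlib

section
/- Let n ≥ 2 be an integer, n′ = n/(n−1), let φ : [0,∞) → [0,∞) be quasiconcave, and let γ, ℓ > 0. Let g : (0,∞) → [0,∞) be nonincreasing and locally integrable, and set G(s) = (1/s) ∫₀^s g(r) dr. Then sup_{s∈(0, γ ℓ^{1/n′})} G(s) φ(γ^{−n′} s^{n′}) ≤ sup_{s∈(0, ℓ)} (φ(s)/s) ∫₀^s G(γ r^{1/n′}) dr ≤ n · sup_{s∈(0, γ ℓ^{1/n′})} G(s) φ(γ^{−n′} s^{n′}). -/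
open MeasureTheory Set Filter
open scoped ENNReal

/-- The level average `G(s) = (1/s) ∫₀^s g(r) dr`. -/
noncomputable def levelAvg (g : ℝ → ℝ≥0∞) (s : ℝ) : ℝ≥0∞ :=
  (∫⁻ r in Set.Ioc (0:ℝ) s, g r) / ENNReal.ofReal s

/-- `φ : [0,∞) → [0,∞)` is quasiconcave: increasing, vanishing only at `0`, and with
`φ(s)/s` decreasing on `(0,∞)`. -/
structure Quasiconcave (φ : ℝ → ℝ) : Prop where
  zero : φ 0 = 0
  pos : ∀ s > (0:ℝ), 0 < φ s
  mono : MonotoneOn φ (Set.Ici 0)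
  ratio_anti : AntitoneOn (fun s => φ s / s) (Set.Ioi 0)

/-!
With `p = 1/n' = (n-1)/n`, the substitution `s = γ t^p` maps `(0, ℓ)` onto `(0, γ ℓ^p)` and turns
the argument of `φ` into `t`, so both suprema run over `t ∈ (0, ℓ)` and it suffices to compare
`t G(γ t^p)` with `∫₀^t G(γ r^p) dr`. Since `G` is nonincreasing, the integral is at least
`t G(γ t^p)`. Since `s G(s) = ∫₀^s g` is nondecreasing, `G(γ r^p) ≤ (t/r)^p G(γ t^p)` for `r ≤ t`,
and `∫₀^t (t/r)^p dr = t/(1-p) = n t`.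
-/

lemma levelAvg_mul_ofReal (g : ℝ → ℝ≥0∞) {a : ℝ} (ha : 0 < a) :
    levelAvg g a * ENNReal.ofReal a = ∫⁻ r in Ioc 0 a, g r :=
  ENNReal.div_mul_cancel (ENNReal.ofReal_pos.mpr ha).ne' ENNReal.ofReal_ne_top

lemma levelAvg_le_mul_ofReal_div (g : ℝ → ℝ≥0∞) {a b : ℝ} (ha : 0 < a) (hab : a ≤ b) :
    levelAvg g a ≤ levelAvg g b * ENNReal.ofReal (b / a) := by
  calc levelAvg g a ≤ (∫⁻ r in Ioc 0 b, g r) / ENNReal.ofReal a :=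
        ENNReal.div_le_div_right (lintegral_mono_set (Ioc_subset_Ioc_right hab)) _
    _ = levelAvg g b * ENNReal.ofReal (b / a) := by
        rw [← levelAvg_mul_ofReal g (ha.trans_le hab), mul_div_assoc,
          ENNReal.ofReal_div_of_pos ha]

lemma apply_le_levelAvg {g : ℝ → ℝ≥0∞} (hg : AntitoneOn g (Ioi 0)) {a r : ℝ} (ha : 0 < a)
    (har : a ≤ r) :
    g r ≤ levelAvg g a := by
  rw [levelAvg, ENNReal.le_div_iff_mul_le (.inl (ENNReal.ofReal_pos.mpr ha).ne')
    (.inl ENNReal.ofReal_ne_top)]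
  calc g r * ENNReal.ofReal a = ∫⁻ _ in Ioc 0 a, g r := by
        rw [setLIntegral_const, Real.volume_Ioc, sub_zero]
    _ ≤ ∫⁻ u in Ioc 0 a, g u :=
        setLIntegral_mono' measurableSet_Ioc fun u hu =>
          hg hu.1 (mem_Ioi.mpr (ha.trans_le har)) (hu.2.trans har)

lemma levelAvg_antitoneOn {g : ℝ → ℝ≥0∞} (hg : AntitoneOn g (Ioi 0)) :
    AntitoneOn (levelAvg g) (Ioi 0) := by
  intro a (ha : 0 < a) b _ hab
  have htail : ∫⁻ r in Ioc a b, g r ≤ levelAvg g a * ENNReal.ofReal (b - a) := by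
    calc ∫⁻ r in Ioc a b, g r ≤ ∫⁻ _ in Ioc a b, levelAvg g a :=
          setLIntegral_mono' measurableSet_Ioc fun r hr => apply_le_levelAvg hg ha hr.1.le
      _ = levelAvg g a * ENNReal.ofReal (b - a) := by rw [setLIntegral_const, Real.volume_Ioc]
  refine ENNReal.div_le_of_le_mul ?_
  calc ∫⁻ r in Ioc 0 b, g r = (∫⁻ r in Ioc 0 a, g r) + ∫⁻ r in Ioc a b, g r := by
        rw [← lintegral_union measurableSet_Ioc (Ioc_disjoint_Ioc_of_le le_rfl),
          Ioc_union_Ioc_eq_Ioc ha.le hab]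
    _ ≤ levelAvg g a * ENNReal.ofReal a + levelAvg g a * ENNReal.ofReal (b - a) :=
        add_le_add (levelAvg_mul_ofReal g ha).ge htail
    _ = levelAvg g a * ENNReal.ofReal b := by
        rw [← mul_add, ← ENNReal.ofReal_add ha.le (sub_nonneg.2 hab), add_sub_cancel]

lemma lintegral_Ioc_rpow {s t : ℝ} (hs : 0 < s) (ht : -1 < t) :
    ∫⁻ r in Ioc 0 s, ENNReal.ofReal (r ^ t) = ENNReal.ofReal (s ^ (t + 1) / (t + 1)) := by
  have hint : IntegrableOn (fun r : ℝ => r ^ t) (Ioc 0 s) := by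
    rw [← intervalIntegrable_iff_integrableOn_Ioc_of_le hs.le]
    exact intervalIntegral.intervalIntegrable_rpow' ht
  have hnonneg : 0 ≤ᵐ[volume.restrict (Ioc 0 s)] fun r : ℝ => r ^ t :=
    (ae_restrict_iff' measurableSet_Ioc).2
      (ae_of_all _ fun r hr => (Real.rpow_pos_of_pos hr.1 t).le)
  rw [← ofReal_integral_eq_lintegral_ofReal hint hnonneg, ← intervalIntegral.integral_of_le hs.le,
    integral_rpow (.inl ht), Real.zero_rpow (by linarith), sub_zero]

lemma image_mul_rpow_Ioo {γ ℓ p : ℝ} (hγ : 0 < γ) (hℓ : 0 ≤ ℓ) (hp : 0 < p) :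
    (fun t => γ * t ^ p) '' Ioo 0 ℓ = Ioo 0 (γ * ℓ ^ p) := by
  ext s
  constructor
  · rintro ⟨t, ⟨ht0, htℓ⟩, rfl⟩
    exact ⟨by positivity, mul_lt_mul_of_pos_left (Real.rpow_lt_rpow ht0.le htℓ hp) hγ⟩
  · rintro ⟨hs0, hsℓ⟩
    have hsγ : 0 ≤ s / γ := by positivity
    refine ⟨(s / γ) ^ p⁻¹, ⟨by positivity, ?_⟩, ?_⟩
    · rw [Real.rpow_inv_lt_iff_of_pos hsγ hℓ hp, div_lt_iff₀' hγ]
      exact hsℓ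
    · simp only [Real.rpow_inv_rpow hsγ hp.ne', mul_div_cancel₀ _ hγ.ne']

lemma rpow_neg_inv_mul_mul_rpow_rpow_inv {γ t p : ℝ} (hγ : 0 < γ) (ht : 0 ≤ t) (hp : p ≠ 0) :
    γ ^ (-p⁻¹) * (γ * t ^ p) ^ p⁻¹ = t := by
  rw [Real.mul_rpow hγ.le (Real.rpow_nonneg ht p), Real.rpow_rpow_inv ht hp, ← mul_assoc,
    ← Real.rpow_add hγ, neg_add_cancel, Real.rpow_zero, one_mul]

section Hardy

variable {γ p t : ℝ}

lemma ofReal_mul_levelAvg_le_lintegral {g : ℝ → ℝ≥0∞} (hg : AntitoneOn g (Ioi 0)) (hγ : 0 < γ)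
    (hp : 0 ≤ p) (ht : 0 < t) :
    ENNReal.ofReal t * levelAvg g (γ * t ^ p) ≤ ∫⁻ r in Ioc 0 t, levelAvg g (γ * r ^ p) := by
  calc ENNReal.ofReal t * levelAvg g (γ * t ^ p) = ∫⁻ _ in Ioc 0 t, levelAvg g (γ * t ^ p) := by
        rw [setLIntegral_const, Real.volume_Ioc, sub_zero, mul_comm]
    _ ≤ ∫⁻ r in Ioc 0 t, levelAvg g (γ * r ^ p) :=
        setLIntegral_mono' measurableSet_Ioc fun r hr =>
          levelAvg_antitoneOn hg (mul_pos hγ (Real.rpow_pos_of_pos hr.1 p))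
            (mul_pos hγ (Real.rpow_pos_of_pos ht p))
            (mul_le_mul_of_nonneg_left (Real.rpow_le_rpow hr.1.le hr.2 hp) hγ.le)

lemma lintegral_le_ofReal_mul_levelAvg (g : ℝ → ℝ≥0∞) (hγ : 0 < γ) (hp0 : 0 ≤ p) (hp1 : p < 1)
    (ht : 0 < t) :
    ∫⁻ r in Ioc 0 t, levelAvg g (γ * r ^ p) ≤
      ENNReal.ofReal (1 - p)⁻¹ * (ENNReal.ofReal t * levelAvg g (γ * t ^ p)) := by
  have hpoint : ∀ r ∈ Ioc 0 t, levelAvg g (γ * r ^ p) ≤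
      levelAvg g (γ * t ^ p) * ENNReal.ofReal (t ^ p) * ENNReal.ofReal (r ^ (-p)) := by
    intro r ⟨hr0, hrt⟩
    have hγr : 0 < γ * r ^ p := mul_pos hγ (Real.rpow_pos_of_pos hr0 p)
    refine (levelAvg_le_mul_ofReal_div g hγr
      (mul_le_mul_of_nonneg_left (Real.rpow_le_rpow hr0.le hrt hp0) hγ.le)).trans_eq ?_
    rw [mul_div_mul_left _ _ hγ.ne', div_eq_mul_inv, ← Real.rpow_neg hr0.le,
      ENNReal.ofReal_mul (Real.rpow_nonneg ht.le p), mul_assoc]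
  have hexp : t ^ p * (t ^ (-p + 1) / (-p + 1)) = (1 - p)⁻¹ * t := by
    rw [mul_div_assoc', ← Real.rpow_add ht, add_neg_cancel_left, Real.rpow_one, neg_add_eq_sub,
      div_eq_inv_mul]
  calc ∫⁻ r in Ioc 0 t, levelAvg g (γ * r ^ p)
      ≤ ∫⁻ r in Ioc 0 t,
          levelAvg g (γ * t ^ p) * ENNReal.ofReal (t ^ p) * ENNReal.ofReal (r ^ (-p)) :=
        setLIntegral_mono' measurableSet_Ioc hpoint
    _ = levelAvg g (γ * t ^ p) * ENNReal.ofReal (t ^ p * (t ^ (-p + 1) / (-p + 1))) := by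
        rw [lintegral_const_mul _ (by fun_prop), lintegral_Ioc_rpow ht (by linarith), mul_assoc,
          ENNReal.ofReal_mul (Real.rpow_nonneg ht.le p)]
    _ = ENNReal.ofReal (1 - p)⁻¹ * (ENNReal.ofReal t * levelAvg g (γ * t ^ p)) := by
        rw [hexp, ENNReal.ofReal_mul (inv_nonneg.2 (sub_nonneg.2 hp1.le))]
        ring

end Hardy

theorem marcinkiewicz_norm_equiv_general
    (n : ℕ) (hn : 2 ≤ n) (φ : ℝ → ℝ)
    (γ ℓ : ℝ) (hγ : 0 < γ) (hℓ : 0 < ℓ)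
    (g : ℝ → ℝ≥0∞) (hg : AntitoneOn g (Set.Ioi 0)) :
    (⨆ s ∈ Set.Ioo (0:ℝ) (γ * ℓ ^ (((n:ℝ)-1)/n)),
        levelAvg g s * ENNReal.ofReal (φ (γ ^ (-((n:ℝ)/((n:ℝ)-1))) * s ^ ((n:ℝ)/((n:ℝ)-1))))) ≤
      (⨆ s ∈ Set.Ioo (0:ℝ) ℓ,
        ENNReal.ofReal (φ s / s) *
          ∫⁻ r in Set.Ioc (0:ℝ) s, levelAvg g (γ * r ^ (((n:ℝ)-1)/n))) ∧
    (⨆ s ∈ Set.Ioo (0:ℝ) ℓ,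
        ENNReal.ofReal (φ s / s) *
          ∫⁻ r in Set.Ioc (0:ℝ) s, levelAvg g (γ * r ^ (((n:ℝ)-1)/n))) ≤
      (n : ℝ≥0∞) *
        ⨆ s ∈ Set.Ioo (0:ℝ) (γ * ℓ ^ (((n:ℝ)-1)/n)),
          levelAvg g s * ENNReal.ofReal (φ (γ ^ (-((n:ℝ)/((n:ℝ)-1))) * s ^ ((n:ℝ)/((n:ℝ)-1)))) := by
  have hn' : (2:ℝ) ≤ n := by exact_mod_cast hn
  have hp0 : 0 < ((n:ℝ) - 1) / n := div_pos (by linarith) (by linarith)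
  rw [← inv_div ((n:ℝ) - 1), ← image_mul_rpow_Ioo hγ hℓ.le hp0, iSup_image]
  set p : ℝ := ((n:ℝ) - 1) / n
  have hp1 : p < 1 := by rw [div_lt_one (by positivity)]; linarith
  have hn_eq : (n : ℝ≥0∞) = ENNReal.ofReal (1 - p)⁻¹ := by
    rw [show 1 - p = (n:ℝ)⁻¹ by simp only [p]; field_simp; ring, inv_inv, ENNReal.ofReal_natCast]
  have hsplit : ∀ t > (0:ℝ), ∀ a b,
      b * ENNReal.ofReal a = ENNReal.ofReal (a / t) * (ENNReal.ofReal t * b) := by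
    intro t ht a b
    rw [← mul_assoc, ← ENNReal.ofReal_mul' ht.le, div_mul_cancel₀ _ ht.ne', mul_comm]
  refine ⟨iSup₂_mono fun t ht => ?_, iSup₂_le fun t ht => ?_⟩
  · rw [rpow_neg_inv_mul_mul_rpow_rpow_inv hγ ht.1.le hp0.ne', hsplit t ht.1]
    exact mul_le_mul_right (ofReal_mul_levelAvg_le_lintegral hg hγ hp0.le ht.1) _
  · calc ENNReal.ofReal (φ t / t) * ∫⁻ r in Ioc 0 t, levelAvg g (γ * r ^ p)
        ≤ ENNReal.ofReal (φ t / t) *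
            (ENNReal.ofReal (1 - p)⁻¹ * (ENNReal.ofReal t * levelAvg g (γ * t ^ p))) :=
          mul_le_mul_right (lintegral_le_ofReal_mul_levelAvg g hγ hp0.le hp1 ht.1) _
      _ = n * (levelAvg g (γ * t ^ p) * ENNReal.ofReal (φ (γ ^ (-p⁻¹) * (γ * t ^ p) ^ p⁻¹))) := by
          rw [rpow_neg_inv_mul_mul_rpow_rpow_inv hγ ht.1.le hp0.ne', hsplit t ht.1, hn_eq]
          ring
      _ ≤ _ := by gcongr; exact le_iSup₂_of_le t ht le_rfl

theorem marcinkiewicz_norm_equiv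
    (n : ℕ) (hn : 2 ≤ n) (φ : ℝ → ℝ) (hφ : Quasiconcave φ)
    (γ ℓ : ℝ) (hγ : 0 < γ) (hℓ : 0 < ℓ)
    (g : ℝ → ℝ≥0∞) (hg : AntitoneOn g (Set.Ioi 0))
    (hloc : ∀ s > (0:ℝ), (∫⁻ r in Set.Ioc (0:ℝ) s, g r) < ⊤) :
    (⨆ s ∈ Set.Ioo (0:ℝ) (γ * ℓ ^ (((n:ℝ)-1)/n)),
        levelAvg g s * ENNReal.ofReal (φ (γ ^ (-((n:ℝ)/((n:ℝ)-1))) * s ^ ((n:ℝ)/((n:ℝ)-1))))) ≤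
      (⨆ s ∈ Set.Ioo (0:ℝ) ℓ,
        ENNReal.ofReal (φ s / s) *
          ∫⁻ r in Set.Ioc (0:ℝ) s, levelAvg g (γ * r ^ (((n:ℝ)-1)/n))) ∧
    (⨆ s ∈ Set.Ioo (0:ℝ) ℓ,
        ENNReal.ofReal (φ s / s) *
          ∫⁻ r in Set.Ioc (0:ℝ) s, levelAvg g (γ * r ^ (((n:ℝ)-1)/n))) ≤
      (n : ℝ≥0∞) *
        ⨆ s ∈ Set.Ioo (0:ℝ) (γ * ℓ ^ (((n:ℝ)-1)/n)),
          levelAvg g s * ENNReal.ofReal (φ (γ ^ (-((n:ℝ)/((n:ℝ)-1))) * s ^ ((n:ℝ)/((n:ℝ)-1)))) :=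
  marcinkiewicz_norm_equiv_general n hn φ γ ℓ hγ hℓ g hg
end

section
/- Let n ≥ 2 be an integer and let A be a finite-valued Young function with A(t) > 0 for t > 0, satisfying the ∇₂-condition globally and the conditions ∫₀ (τ/A(τ))^{1/(n−1)} dτ < ∞ near zero and ∫^∞ (τ/A(τ))^{1/(n−1)} dτ = ∞. Then lim_{τ→0⁺} ( sup_{t>0} A_T(τ t)/(τ A_T(t)) ) = 0. -/
open MeasureTheory Set Filter
open scoped ENNReal

/-- A finite-valued Young function: convex, vanishing at `0`, nonnegative on `[0,∞)`,
and not identically zero there. -/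
structure IsYoung (A : ℝ → ℝ) : Prop where
  zero : A 0 = 0
  nonneg : ∀ t, 0 ≤ t → 0 ≤ A t
  convex : ConvexOn ℝ (Set.Ici 0) A
  nontrivial : ∃ t, 0 < t ∧ 0 < A t

/-- `H_n(t) = ( ∫₀^t (τ/A(τ))^{1/(n−1)} dτ )^{1/n′}`, where `n′ = n/(n−1)`. -/
noncomputable def Hn (A : ℝ → ℝ) (n : ℕ) (t : ℝ) : ℝ :=
  ((∫⁻ τ in Set.Ioc (0:ℝ) t,
      ENNReal.ofReal ((τ / A τ) ^ (1/((n:ℝ)-1)))).toReal) ^ (((n:ℝ)-1)/n)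

/-- The inverse of `H_n` (as a generalized inverse). -/
noncomputable def HnInv (A : ℝ → ℝ) (n : ℕ) (t : ℝ) : ℝ :=
  sInf {s : ℝ | 0 ≤ s ∧ t ≤ Hn A n s}

/-- The Sobolev trace conjugate `A_T(t) = ∫₀^t A(H_n⁻¹(τ))/H_n⁻¹(τ) dτ`. -/
noncomputable def AT (A : ℝ → ℝ) (n : ℕ) (t : ℝ) : ℝ :=
  ∫ τ in Set.Ioc (0:ℝ) t, A (HnInv A n τ) / HnInv A n τ

/-- `∫₀ (τ/A(τ))^{1/(n−1)} dτ < ∞` near zero. -/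
def ConvNearZero (A : ℝ → ℝ) (n : ℕ) : Prop :=
  ∃ δ > (0:ℝ), (∫⁻ τ in Set.Ioc (0:ℝ) δ,
    ENNReal.ofReal ((τ / A τ) ^ (1/((n:ℝ)-1)))) < ⊤

/-- `∫^∞ (τ/A(τ))^{1/(n−1)} dτ = ∞`. -/
def DivNearInfty (A : ℝ → ℝ) (n : ℕ) : Prop :=
  (∫⁻ τ in Set.Ioi (1:ℝ), ENNReal.ofReal ((τ / A τ) ^ (1/((n:ℝ)-1)))) = ⊤

/-- `A` satisfies the `∇₂`-condition globally. -/
def Nabla2Global (A : ℝ → ℝ) : Prop :=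
  ∃ c > (2:ℝ), ∀ t ≥ (0:ℝ), c * A t ≤ A (2 * t)

/-!
Under the `∇₂`-condition with a constant `c ∈ (2, 4)`, the substitution `τ ↦ 2τ` gives
`H_n(2s) ≤ κ H_n(s)` with `κ = (2 (2/c)^{1/(n-1)})^{1/n'} > 1`; hence `H_n⁻¹(κσ) ≥ 2 H_n⁻¹(σ)`,
and since `A(s)/s` is nondecreasing the integrand `A(H_n⁻¹)/H_n⁻¹` of `A_T` gains a factor `c/2`
when its argument is multiplied by `κ`. So `A_T(κt) ≥ L A_T(t)` with `L = κc/2 > κ`, and iterating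
yields `A_T(τt) ≤ (κτ)^p A_T(t)` for `τ ≤ 1`, where `p = log_κ L > 1`: the supremum is
`O(τ^{p-1})`.
-/

open scoped Topology

lemma IsYoung.monotoneOn_div {A : ℝ → ℝ} (hA : IsYoung A) :
    MonotoneOn (fun x => A x / x) (Ici 0) := by
  intro x hx y hy hxy
  rcases (mem_Ici.1 hx).eq_or_lt with rfl | hx
  · simpa using div_nonneg (hA.nonneg y hy) hy
  simpa [hA.zero] using hA.convex.secant_mono self_mem_Ici (mem_Ici.2 hx.le) hy hx.ne'
    (hx.trans_le hxy).ne' hxy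

-- `c < 4 ≤ 2 ^ n` is what keeps `hnGrowth n c = 2 * c ^ (-1 / n)` above `1`.
lemma Nabla2Global.exists_lt_four {A : ℝ → ℝ} (hA : IsYoung A) (h : Nabla2Global A) :
    ∃ c, 2 < c ∧ c < 4 ∧ ∀ t ≥ 0, c * A t ≤ A (2 * t) := by
  obtain ⟨c, hc, hnab⟩ := h
  refine ⟨min c 3, lt_min hc (by norm_num), (min_le_right _ _).trans_lt (by norm_num),
    fun t ht => ?_⟩
  exact (mul_le_mul_of_nonneg_right (min_le_left _ _) (hA.nonneg t ht)).trans (hnab t ht)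

lemma setLIntegral_Ioc_zero_mul (g : ℝ → ℝ≥0∞) {a : ℝ} (ha : 0 < a) (u : ℝ) :
    ∫⁻ x in Ioc 0 (a * u), g x = ENNReal.ofReal a * ∫⁻ x in Ioc 0 u, g (a * x) := by
  have he : MeasurableEmbedding (a * ·) := (Homeomorph.mulLeft₀ a ha.ne').measurableEmbedding
  have hpre : (a * ·) ⁻¹' Ioc 0 (a * u) = Ioc 0 u := by
    ext x; simp [mul_pos_iff_of_pos_left ha, mul_le_mul_iff_right₀ ha]
  have hmap : ∫⁻ x in Ioc 0 u, g (a * x) = ∫⁻ y in Ioc 0 (a * u), g y ∂(volume.map (a * ·)) := by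
    rw [he.restrict_map, he.lintegral_map, hpre]
  rw [hmap, Real.map_volume_mul_left ha.ne', Measure.restrict_smul, lintegral_smul_measure,
    smul_eq_mul, ← mul_assoc, ← ENNReal.ofReal_mul ha.le, abs_of_pos (inv_pos.2 ha),
    mul_inv_cancel₀ ha.ne', ENNReal.ofReal_one, one_mul]

lemma setLIntegral_Ioc_zero_mul_le {g : ℝ → ℝ≥0∞} {a : ℝ} {K : ℝ≥0∞} (ha : 0 < a) (hK : K ≠ ⊤)
    (hg : ∀ x > 0, g (a * x) ≤ K * g x) (u : ℝ) :
    ∫⁻ x in Ioc 0 (a * u), g x ≤ ENNReal.ofReal a * K * ∫⁻ x in Ioc 0 u, g x := by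
  rw [setLIntegral_Ioc_zero_mul g ha, mul_assoc, ← lintegral_const_mul' _ _ hK]
  exact mul_le_mul_of_nonneg_left
    (setLIntegral_mono' measurableSet_Ioc fun x hx => hg x hx.1) zero_le

lemma lt_top_of_two_mul_le {I : ℝ → ℝ≥0∞} (hI : Monotone I) {K : ℝ≥0∞} (hK : K ≠ ⊤)
    (hI2 : ∀ u, I (2 * u) ≤ K * I u) {δ : ℝ} (hδ : 0 < δ) (hIδ : I δ < ⊤) (t : ℝ) : I t < ⊤ := by
  have hpow : ∀ k : ℕ, I (2 ^ k * δ) < ⊤ := by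
    intro k
    induction k with
    | zero => simpa using hIδ
    | succ k ih =>
      rw [pow_succ', mul_assoc]
      exact (hI2 _).trans_lt (ENNReal.mul_lt_top hK.lt_top ih)
  obtain ⟨k, hk⟩ := pow_unbounded_of_one_lt (t / δ) one_lt_two
  exact (hI ((div_le_iff₀ hδ).1 hk.le)).trans_lt (hpow k)

lemma mul_integral_le_integral_of_le_comp_mul {φ : ℝ → ℝ} (hφ : Monotone φ) {κ l : ℝ}
    (hκ : 0 < κ) (hl : ∀ x, l * φ x ≤ φ (κ * x)) {t : ℝ} (ht : 0 ≤ t) :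
    κ * l * ∫ x in 0..t, φ x ≤ ∫ x in 0..κ * t, φ x := by
  have hcomp : Monotone fun x => φ (κ * x) := fun _ _ hxy => hφ (by gcongr)
  have hsub : κ * ∫ x in 0..t, φ (κ * x) = ∫ x in 0..κ * t, φ x := by
    rw [intervalIntegral.mul_integral_comp_mul_left, mul_zero]
  rw [← hsub, mul_assoc, ← intervalIntegral.integral_const_mul]
  gcongr
  exact intervalIntegral.integral_mono_on ht ((hφ.intervalIntegrable).const_mul _)
    hcomp.intervalIntegrable fun x _ => hl x

lemma le_rpow_mul_of_mul_le_comp_mul {f : ℝ → ℝ} (hf : MonotoneOn f (Ici 0))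
    (hf0 : ∀ t ≥ 0, 0 ≤ f t) {κ L : ℝ} (hκ : 1 < κ) (hL : 1 ≤ L)
    (hscale : ∀ t ≥ 0, L * f t ≤ f (κ * t)) {τ t : ℝ} (hτ0 : 0 < τ) (hτ1 : τ ≤ 1) (ht : 0 ≤ t) :
    f (τ * t) ≤ (κ * τ) ^ Real.logb κ L * f t := by
  set p := Real.logb κ L
  have hp : 0 ≤ p := Real.logb_nonneg hκ hL
  have hiter : ∀ k : ℕ, ∀ s ≥ 0, L ^ k * f s ≤ f (κ ^ k * s) := by
    intro k
    induction k with
    | zero => simp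
    | succ k ih =>
      intro s hs
      calc L ^ (k + 1) * f s = L * (L ^ k * f s) := by ring
        _ ≤ L * f (κ ^ k * s) := by gcongr; exact ih s hs
        _ ≤ f (κ * (κ ^ k * s)) := hscale _ (by positivity)
        _ = f (κ ^ (k + 1) * s) := by ring_nf
  obtain ⟨k, hk, hk'⟩ := exists_nat_pow_near (one_le_inv_iff₀.2 ⟨hτ0, hτ1⟩) hκ
  have hκk : 0 < κ ^ k := by positivity
  set s := (κ ^ k)⁻¹ * t
  have hs : 0 ≤ s := by positivity
  have hLk : (κ ^ k) ^ p = L ^ k := by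
    rw [← Real.rpow_natCast_mul (by positivity), mul_comm, Real.rpow_mul_natCast (by positivity),
      Real.rpow_logb (by positivity) hκ.ne' (by positivity)]
  have hτs : f (τ * t) ≤ f s :=
    hf (mul_nonneg hτ0.le ht) hs (mul_le_mul_of_nonneg_right ((le_inv_comm₀ hτ0 hκk).2 hk) ht)
  have hst : L ^ k * f s ≤ f t := by
    simpa [s, ← mul_assoc, mul_inv_cancel₀ hκk.ne'] using hiter k s hs
  have hone : 1 ≤ (κ * τ) ^ p * L ^ k := by
    rw [← hLk, ← Real.mul_rpow (by positivity) hκk.le]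
    refine Real.one_le_rpow ?_ hp
    have := (inv_lt_iff_one_lt_mul₀ hτ0).1 hk'
    linarith [show κ ^ (k + 1) * τ = κ * τ * κ ^ k by ring]
  calc f (τ * t) ≤ f s := hτs
    _ ≤ (κ * τ) ^ p * L ^ k * f s := le_mul_of_one_le_left (hf0 s hs) hone
    _ ≤ (κ * τ) ^ p * f t := by rw [mul_assoc]; gcongr

theorem tendsto_iSup_div_of_mul_le_comp_mul {f : ℝ → ℝ} (hf : MonotoneOn f (Ici 0))
    (hf0 : ∀ t ≥ 0, 0 ≤ f t) {κ L : ℝ} (hκ : 1 < κ) (hκL : κ < L)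
    (hscale : ∀ t ≥ 0, L * f t ≤ f (κ * t)) :
    Tendsto (fun τ : ℝ => ⨆ t ∈ Ioi (0:ℝ), ENNReal.ofReal (f (τ * t) / (τ * f t)))
      (𝓝[>] 0) (𝓝 0) := by
  set p := Real.logb κ L
  have hp : 1 < p := by
    simpa [p, Real.logb_self_eq_one hκ] using Real.logb_lt_logb hκ (by linarith) hκL
  have hbound : Tendsto (fun τ : ℝ => κ ^ p * τ ^ (p - 1)) (𝓝[>] 0) (𝓝 0) := by
    have := ((Real.continuousAt_rpow_const 0 (p - 1) (Or.inr (by linarith))).const_mul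
      (κ ^ p)).tendsto
    rw [Real.zero_rpow (by linarith), mul_zero] at this
    exact this.mono_left nhdsWithin_le_nhds
  refine tendsto_of_tendsto_of_tendsto_of_le_of_le' tendsto_const_nhds
    (by simpa using ENNReal.tendsto_ofReal hbound)
    (Eventually.of_forall fun _ => zero_le) ?_
  filter_upwards [Ioo_mem_nhdsGT one_pos] with τ ⟨hτ0, hτ1⟩
  refine iSup₂_le fun t ht => ENNReal.ofReal_le_ofReal ?_
  have ht0 : (0:ℝ) ≤ t := le_of_lt ht
  refine div_le_of_le_mul₀ (by positivity [hf0 t ht0]) (by positivity) ?_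
  calc f (τ * t) ≤ (κ * τ) ^ p * f t :=
        le_rpow_mul_of_mul_le_comp_mul hf hf0 hκ (by linarith) hscale hτ0 hτ1.le ht0
    _ = κ ^ p * τ ^ (p - 1) * (τ * f t) := by
        rw [Real.mul_rpow (by linarith) hτ0.le, Real.rpow_sub_one hτ0.ne']
        field_simp

noncomputable def hnIntegral (A : ℝ → ℝ) (n : ℕ) (t : ℝ) : ℝ≥0∞ :=
  ∫⁻ τ in Ioc 0 t, ENNReal.ofReal ((τ / A τ) ^ (1 / ((n : ℝ) - 1)))

noncomputable def hnGrowth (n : ℕ) (c : ℝ) : ℝ :=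
  (2 * (2 / c) ^ (1 / ((n : ℝ) - 1))) ^ (((n : ℝ) - 1) / n)

lemma one_lt_hnGrowth {n : ℕ} {c : ℝ} (hn : 2 ≤ n) (hc : 2 ≤ c) (hc4 : c < 4) :
    1 < hnGrowth n c := by
  have hn' : (2 : ℝ) ≤ n := by exact_mod_cast hn
  have hp : 1 / ((n : ℝ) - 1) ≤ 1 := (div_le_one (by linarith)).2 (by linarith)
  have hbase : 2 / c ≤ (2 / c) ^ (1 / ((n : ℝ) - 1)) := by
    simpa using Real.rpow_le_rpow_of_exponent_ge (by positivity)
      ((div_le_one (by linarith)).2 hc) hp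
  have hfour : 1 < 4 / c := (one_lt_div (by linarith)).2 hc4
  refine Real.one_lt_rpow ?_ (div_pos (by linarith) (by linarith))
  linarith [show 2 * (2 / c) = 4 / c by ring]

section Hn

variable {A : ℝ → ℝ} {n : ℕ} {c : ℝ}

lemma Hn_eq_toReal_rpow (t : ℝ) : Hn A n t = (hnIntegral A n t).toReal ^ (((n : ℝ) - 1) / n) :=
  rfl

lemma hnIntegral_mono : Monotone (hnIntegral A n) :=
  fun _ _ h => lintegral_mono_set (Ioc_subset_Ioc_right h)

lemma div_two_mul_le (hc : 0 < c) (hApos : ∀ t > 0, 0 < A t)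
    (hnab : ∀ t ≥ 0, c * A t ≤ A (2 * t)) {x : ℝ} (hx : 0 < x) :
    2 * x / A (2 * x) ≤ 2 / c * (x / A x) := by
  have hAx := hApos x hx
  calc 2 * x / A (2 * x) ≤ 2 * x / (c * A x) :=
        div_le_div_of_nonneg_left (by positivity) (by positivity) (hnab x hx.le)
    _ = 2 / c * (x / A x) := by field_simp

lemma hnIntegral_two_mul_le (hn : 1 ≤ n) (hc : 0 < c) (hApos : ∀ t > 0, 0 < A t)
    (hnab : ∀ t ≥ 0, c * A t ≤ A (2 * t)) (u : ℝ) :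
    hnIntegral A n (2 * u) ≤
      ENNReal.ofReal (2 * (2 / c) ^ (1 / ((n : ℝ) - 1))) * hnIntegral A n u := by
  have hp : 0 ≤ 1 / ((n : ℝ) - 1) := one_div_nonneg.2 (by simp [hn])
  rw [ENNReal.ofReal_mul zero_le_two]
  refine setLIntegral_Ioc_zero_mul_le two_pos ENNReal.ofReal_ne_top (fun x hx => ?_) u
  rw [← ENNReal.ofReal_mul (by positivity), ← Real.mul_rpow (by positivity)
    (div_nonneg hx.le (hApos x hx).le)]
  gcongr
  · exact div_nonneg (by positivity) (hApos _ (by positivity)).le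
  · exact div_two_mul_le hc hApos hnab hx

lemma hnIntegral_lt_top (hn : 1 ≤ n) (hc : 0 < c) (hApos : ∀ t > 0, 0 < A t)
    (hnab : ∀ t ≥ 0, c * A t ≤ A (2 * t)) (hconv : ConvNearZero A n) (t : ℝ) :
    hnIntegral A n t < ⊤ := by
  obtain ⟨δ, hδ, hIδ⟩ := hconv
  exact lt_top_of_two_mul_le hnIntegral_mono ENNReal.ofReal_ne_top
    (hnIntegral_two_mul_le hn hc hApos hnab) hδ hIδ t

lemma exists_lt_hnIntegral (hdiv : DivNearInfty A n) {M : ℝ≥0∞} (hM : M < ⊤) :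
    ∃ t, M < hnIntegral A n t := by
  set ν := volume.withDensity fun τ : ℝ => ENNReal.ofReal ((τ / A τ) ^ (1 / ((n : ℝ) - 1)))
  have hunion : ⋃ t : ℝ, Ioc 1 t = Ioi 1 := by
    ext x; simp
  have hmono : Monotone fun t : ℝ => Ioc 1 t := fun _ _ h => Ioc_subset_Ioc_right h
  have hsup : ⨆ t : ℝ, ν (Ioc 1 t) = ⊤ := by
    rw [← hmono.measure_iUnion, hunion, withDensity_apply _ measurableSet_Ioi]
    exact hdiv
  obtain ⟨t, ht⟩ := lt_iSup_iff.1 (hsup ▸ hM)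
  refine ⟨t, ht.trans_le ?_⟩
  rw [withDensity_apply _ measurableSet_Ioc]
  exact lintegral_mono_set (Ioc_subset_Ioc_left zero_le_one)

lemma exists_le_Hn (hn : 2 ≤ n) (hfin : ∀ t, hnIntegral A n t < ⊤) (hdiv : DivNearInfty A n)
    (σ : ℝ) : ∃ s, 0 ≤ s ∧ σ ≤ Hn A n s := by
  set e := ((n : ℝ) - 1) / n
  have hn' : (2 : ℝ) ≤ n := by exact_mod_cast hn
  have he : 0 < e := div_pos (by linarith) (by linarith)
  set σ' := max σ 0
  obtain ⟨t, ht⟩ := exists_lt_hnIntegral hdiv (ENNReal.ofReal_lt_top (r := σ' ^ e⁻¹))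
  refine ⟨max t 0, le_max_right _ _, ?_⟩
  have hσ' : σ' ^ e⁻¹ ≤ (hnIntegral A n (max t 0)).toReal :=
    (ENNReal.ofReal_le_iff_le_toReal (hfin _).ne).1
      (ht.le.trans (hnIntegral_mono (le_max_left _ _)))
  calc σ ≤ σ' := le_max_left _ _
    _ = (σ' ^ e⁻¹) ^ e := (Real.rpow_inv_rpow (le_max_right _ _) he.ne').symm
    _ ≤ Hn A n (max t 0) := Real.rpow_le_rpow (by positivity) hσ' he.le

lemma Hn_two_mul_le (hn : 1 ≤ n) (hc : 0 < c) (hApos : ∀ t > 0, 0 < A t)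
    (hnab : ∀ t ≥ 0, c * A t ≤ A (2 * t)) (hfin : ∀ t, hnIntegral A n t < ⊤) (u : ℝ) :
    Hn A n (2 * u) ≤ hnGrowth n c * Hn A n u := by
  have hK : 0 ≤ 2 * (2 / c) ^ (1 / ((n : ℝ) - 1)) := by positivity
  have he : 0 ≤ ((n : ℝ) - 1) / n := div_nonneg (by simp [hn]) (Nat.cast_nonneg n)
  rw [Hn_eq_toReal_rpow, Hn_eq_toReal_rpow, hnGrowth, ← Real.mul_rpow hK ENNReal.toReal_nonneg]
  refine Real.rpow_le_rpow ENNReal.toReal_nonneg ?_ he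
  rw [← ENNReal.toReal_ofReal hK, ← ENNReal.toReal_mul]
  exact ENNReal.toReal_mono (ENNReal.mul_ne_top ENNReal.ofReal_ne_top (hfin u).ne)
    (hnIntegral_two_mul_le hn hc hApos hnab u)

end Hn

section HnInv

variable {A : ℝ → ℝ} {n : ℕ}

lemma HnInv_nonneg (σ : ℝ) : 0 ≤ HnInv A n σ :=
  Real.sInf_nonneg fun _ hs => hs.1

lemma HnInv_mono (hunb : ∀ σ, ∃ s, 0 ≤ s ∧ σ ≤ Hn A n s) : Monotone (HnInv A n) :=
  fun _ σ₂ h => csInf_le_csInf ⟨0, fun _ hs => hs.1⟩ (hunb σ₂) fun _ hs => ⟨hs.1, h.trans hs.2⟩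

lemma two_mul_HnInv_le (hunb : ∀ σ, ∃ s, 0 ≤ s ∧ σ ≤ Hn A n s) {κ : ℝ} (hκ : 0 < κ)
    (hH : ∀ s, Hn A n (2 * s) ≤ κ * Hn A n s) (σ : ℝ) :
    2 * HnInv A n σ ≤ HnInv A n (κ * σ) := by
  refine le_csInf (hunb _) fun s ⟨hs0, hs⟩ => ?_
  have hσ : σ ≤ Hn A n (s / 2) := by
    refine le_of_mul_le_mul_left (hs.trans ?_) hκ
    simpa [mul_div_cancel₀] using hH (s / 2)
  have : HnInv A n σ ≤ s / 2 := csInf_le ⟨0, fun _ hs => hs.1⟩ ⟨by positivity, hσ⟩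
  linarith

end HnInv

section Conjugate

variable {A : ℝ → ℝ} {h : ℝ → ℝ}

lemma IsYoung.monotone_comp_div (hA : IsYoung A) (hh : Monotone h) (h0 : ∀ σ, 0 ≤ h σ) :
    Monotone fun σ => A (h σ) / h σ :=
  fun _ _ hσ => hA.monotoneOn_div (h0 _) (h0 _) (hh hσ)

lemma IsYoung.mul_comp_div_le (hA : IsYoung A) {c κ : ℝ} (hnab : ∀ t ≥ 0, c * A t ≤ A (2 * t))
    (h0 : ∀ σ, 0 ≤ h σ) (h2 : ∀ σ, 2 * h σ ≤ h (κ * σ)) (σ : ℝ) :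
    c / 2 * (A (h σ) / h σ) ≤ A (h (κ * σ)) / h (κ * σ) := by
  rcases (h0 σ).eq_or_lt with hs | hs
  · rw [← hs, div_zero, mul_zero]
    exact div_nonneg (hA.nonneg _ (h0 _)) (h0 _)
  calc c / 2 * (A (h σ) / h σ) = c * A (h σ) / (2 * h σ) := by field_simp
    _ ≤ A (2 * h σ) / (2 * h σ) := by gcongr; exact hnab _ hs.le
    _ ≤ A (h (κ * σ)) / h (κ * σ) :=
      hA.monotoneOn_div (by positivity : (0:ℝ) ≤ 2 * h σ) (h0 _) (h2 σ)

end Conjugate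

section AT

variable {A : ℝ → ℝ} {n : ℕ}

lemma AT_eq_intervalIntegral {t : ℝ} (ht : 0 ≤ t) :
    AT A n t = ∫ x in 0..t, A (HnInv A n x) / HnInv A n x :=
  (intervalIntegral.integral_of_le ht).symm

lemma AT_nonneg (hA : IsYoung A) (t : ℝ) : 0 ≤ AT A n t :=
  setIntegral_nonneg measurableSet_Ioc fun _ _ =>
    div_nonneg (hA.nonneg _ (HnInv_nonneg _)) (HnInv_nonneg _)

lemma AT_monotoneOn (hA : IsYoung A) (hunb : ∀ σ, ∃ s, 0 ≤ s ∧ σ ≤ Hn A n s) :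
    MonotoneOn (AT A n) (Ici 0) := by
  intro a ha b hb hab
  rw [AT_eq_intervalIntegral ha, AT_eq_intervalIntegral hb]
  exact intervalIntegral.integral_mono_interval le_rfl ha hab
    (ae_of_all _ fun _ => div_nonneg (hA.nonneg _ (HnInv_nonneg _)) (HnInv_nonneg _))
    (hA.monotone_comp_div (HnInv_mono hunb) HnInv_nonneg).intervalIntegrable

lemma mul_AT_le_AT_mul (hA : IsYoung A) (hunb : ∀ σ, ∃ s, 0 ≤ s ∧ σ ≤ Hn A n s) {c κ : ℝ}
    (hκ : 0 < κ) (hH : ∀ s, Hn A n (2 * s) ≤ κ * Hn A n s)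
    (hnab : ∀ t ≥ 0, c * A t ≤ A (2 * t)) {t : ℝ} (ht : 0 ≤ t) :
    κ * (c / 2) * AT A n t ≤ AT A n (κ * t) := by
  rw [AT_eq_intervalIntegral ht, AT_eq_intervalIntegral (by positivity)]
  exact mul_integral_le_integral_of_le_comp_mul
    (hA.monotone_comp_div (HnInv_mono hunb) HnInv_nonneg) hκ
    (hA.mul_comp_div_le hnab HnInv_nonneg (two_mul_HnInv_le hunb hκ hH)) ht

end AT

theorem AT_sup_ratio_tendsto_zero (n : ℕ) (hn : 2 ≤ n) (A : ℝ → ℝ) (hA : IsYoung A)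
    (hApos : ∀ t > (0:ℝ), 0 < A t)
    (hconv : ConvNearZero A n) (hdiv : DivNearInfty A n)
    (hnabla : Nabla2Global A) :
    Filter.Tendsto
      (fun τ : ℝ => ⨆ t ∈ Set.Ioi (0:ℝ), ENNReal.ofReal (AT A n (τ * t) / (τ * AT A n t)))
      (nhdsWithin 0 (Set.Ioi 0)) (nhds 0) := by
  obtain ⟨c, hc2, hc4, hnab⟩ := hnabla.exists_lt_four hA
  have hn1 : 1 ≤ n := by omega
  have hc : 0 < c := by linarith
  have hfin := hnIntegral_lt_top hn1 hc hApos hnab hconv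
  have hunb := exists_le_Hn hn hfin hdiv
  have hκ := one_lt_hnGrowth hn hc2.le hc4
  refine tendsto_iSup_div_of_mul_le_comp_mul (AT_monotoneOn hA hunb) (fun t _ => AT_nonneg hA t)
    hκ (lt_mul_of_one_lt_right (by linarith) (by linarith : 1 < c / 2)) fun t ht => ?_
  exact mul_AT_le_AT_mul hA hunb (by linarith) (Hn_two_mul_le hn1 hc hApos hnab hfin) hnab ht
end

section
/- Let n ≥ 2 be an integer and n′ = n/(n−1). Let A be a finite-valued Young function satisfying the ∇₂-condition globally, with Young conjugate Ã, and let N be a Young function satisfying condition (G). Let Θ(s) = s A⁻¹( (1/s) ∫_{s^{−1/n′}}^∞ Ã( r ∫₀^{1/r} N⁻¹(1/ρ) dρ ) r^{−(n′+1)} dr ). Then lim_{s→0⁺} Θ(s) = 0 and Θ is strictly increasing on the interval near 0 where it is finite. -/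
open MeasureTheory Set Filter
open scoped ENNReal

/-- The Young conjugate `Ã(x) = sup { x t − A(t) : t ≥ 0 }`, with values in `[0,∞]`. -/
noncomputable def conjE (A : ℝ → ℝ) (x : ℝ≥0∞) : ℝ≥0∞ :=
  ⨆ t : {t : ℝ // 0 ≤ t}, (x * ENNReal.ofReal t.1 - ENNReal.ofReal (A t.1))

/-- The generalized right-continuous inverse `F⁻¹(t) = inf { s ≥ 0 : F(s) > t }`. -/
noncomputable def rcInv (F : ℝ → ℝ) (t : ℝ) : ℝ :=
  sInf {s : ℝ | 0 ≤ s ∧ t < F s}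

/-- The generalized right-continuous inverse of a Young function, acting on `[0,∞]`:
`A⁻¹(t) = inf { x ≥ 0 : A(x) > t }` (with `inf ∅ = ∞`). -/
noncomputable def einv (A : ℝ → ℝ) (t : ℝ≥0∞) : ℝ≥0∞ :=
  sInf {x : ℝ≥0∞ | t < ENNReal.ofReal (A x.toReal)}

/-- `Ξ(s) = (1/s) ∫_{s^{−1/n′}}^∞ Ã( r ∫₀^{1/r} N⁻¹(1/ρ) dρ ) r^{−(n′+1)} dr`,
where `n′ = n/(n−1)`. -/
noncomputable def Xi (A N : ℝ → ℝ) (n : ℕ) (s : ℝ) : ℝ≥0∞ :=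
  (ENNReal.ofReal s)⁻¹ *
    ∫⁻ r in Set.Ioi (s ^ (-(((n:ℝ)-1)/n))),
      conjE A (ENNReal.ofReal r *
          ∫⁻ ρ in Set.Ioc (0:ℝ) (1/r), ENNReal.ofReal (rcInv N (1/ρ))) *
        ENNReal.ofReal (r ^ (-((n:ℝ)/((n:ℝ)-1) + 1)))

/-- `Θ(s) = s A⁻¹(Ξ(s))`. -/
noncomputable def Theta (A N : ℝ → ℝ) (n : ℕ) (s : ℝ) : ℝ≥0∞ :=
  ENNReal.ofReal s * einv A (Xi A N n s)

/-- Condition (G): `∫₀ s^{−1/n′} A⁻¹(Ξ(s)) ds < ∞` near zero. -/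
def CondG (A N : ℝ → ℝ) (n : ℕ) : Prop :=
  ∃ δ > (0:ℝ),
    (∫⁻ s in Set.Ioc (0:ℝ) δ,
      ENNReal.ofReal (s ^ (-(((n:ℝ)-1)/n))) * einv A (Xi A N n s)) < ⊤

/-!
Write `Θ(s) = s A⁻¹(F(s)/s)`, where `F(s) = s Ξ(s)` is nondecreasing in `s`. Convexity of `A` gives
`A⁻¹(r u) ≤ r A⁻¹(u)` for `r ≥ 1`, so `Θ` is nondecreasing. The `∇₂`-condition improves this to
`A⁻¹(r u) ≤ l A⁻¹(u)` for some `l < r`, and it also makes `Ã` positive on `(0, ∞]`, hence `F > 0`;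
together these make `Θ` strictly increasing wherever it is finite. Finally, condition (G) says
`∫₀^δ s^{−1/n′−1} Θ(s) ds < ∞`; since `s^{−1/n′−1}` is not integrable at `0`, `Θ` takes arbitrarily
small values near `0`, and being nondecreasing it tends to `0`.
-/

namespace IsYoung

variable {A : ℝ → ℝ}

theorem map_mul_le (hA : IsYoung A) {θ x : ℝ} (hθ₀ : 0 ≤ θ) (hθ₁ : θ ≤ 1) (hx : 0 ≤ x) :
    A (θ * x) ≤ θ * A x := by
  simpa [hA.zero] using
    hA.convex.2 (mem_Ici.2 hx) (mem_Ici.2 le_rfl) hθ₀ (sub_nonneg.2 hθ₁) (add_sub_cancel θ 1)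

theorem mul_le_map_mul (hA : IsYoung A) {l t : ℝ} (hl : 1 ≤ l) (ht : 0 ≤ t) :
    l * A t ≤ A (l * t) := by
  have hl₀ : 0 < l := one_pos.trans_le hl
  have h := hA.map_mul_le (inv_nonneg.2 hl₀.le) (inv_le_one_of_one_le₀ hl)
    (mul_nonneg hl₀.le ht)
  rwa [inv_mul_cancel_left₀ hl₀.ne', le_inv_mul_iff₀ hl₀] at h

theorem exists_lt (hA : IsYoung A) (M : ℝ) : ∃ x, 0 ≤ x ∧ M < A x := by
  obtain ⟨t, ht, hAt⟩ := hA.nontrivial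
  set l := max 1 ((M + 1) / A t)
  refine ⟨l * t, by positivity, ?_⟩
  have hl : M + 1 ≤ l * A t := (div_le_iff₀ hAt).1 (le_max_right _ _)
  linarith [hA.mul_le_map_mul (le_max_left 1 ((M + 1) / A t)) ht.le]

theorem exists_pos_forall_lt (hA : IsYoung A) {τ : ℝ} (hτ : 0 < τ) :
    ∃ η > 0, ∀ x, 0 ≤ x → x < η → A x < τ := by
  have hA₁ : 0 ≤ A 1 := hA.nonneg 1 zero_le_one
  refine ⟨min 1 (τ / (A 1 + 1)), by positivity, fun x hx₀ hxη => ?_⟩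
  have hx₁ : x ≤ 1 := hxη.le.trans (min_le_left _ _)
  have hxτ : x * (A 1 + 1) < τ := (lt_div_iff₀ (by positivity)).1 (hxη.trans_le (min_le_right _ _))
  have h := hA.map_mul_le hx₀ hx₁ zero_le_one
  rw [mul_one] at h
  nlinarith

end IsYoung

namespace Nabla2Global

variable {A : ℝ → ℝ}

theorem exists_pos_lt_mul (h : Nabla2Global A) {ε : ℝ} (hε : 0 < ε) :
    ∃ t > 0, A t < ε * t := by
  obtain ⟨c, hc, hA⟩ := h
  have hiter : ∀ k : ℕ, c ^ k * A (2 ^ k)⁻¹ ≤ A 1 := by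
    intro k
    induction k with
    | zero => simp
    | succ k ih =>
      have h2 := hA (2 ^ (k + 1))⁻¹ (by positivity)
      rw [show (2:ℝ) * (2 ^ (k + 1))⁻¹ = (2 ^ k)⁻¹ by ring] at h2
      calc c ^ (k + 1) * A (2 ^ (k + 1))⁻¹ = c ^ k * (c * A (2 ^ (k + 1))⁻¹) := by ring
        _ ≤ c ^ k * A (2 ^ k)⁻¹ := by gcongr
        _ ≤ A 1 := ih
  obtain ⟨k, hk⟩ := pow_unbounded_of_one_lt (A 1 / ε) (by linarith : 1 < c / 2)
  refine ⟨(2 ^ k)⁻¹, by positivity, ?_⟩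
  have hck : 0 < c ^ k := by positivity
  rw [div_lt_iff₀' hε, div_pow] at hk
  calc A (2 ^ k)⁻¹ ≤ A 1 / c ^ k := (le_div_iff₀' hck).2 (hiter k)
    _ < ε * (c ^ k / 2 ^ k) / c ^ k := by gcongr
    _ = ε * (2 ^ k)⁻¹ := by field_simp

-- `t` is a convex combination of `l t` and `l t / 2`, and `A (l t / 2) ≤ A (l t) / c`;
-- `l` is chosen so that the resulting bound on `A t` is exactly `A (l t) / r`.
theorem exists_scale_lt_of_le_two (hA : IsYoung A) (h : Nabla2Global A) {r : ℝ} (hr₁ : 1 < r)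
    (hr₂ : r ≤ 2) : ∃ l, 1 ≤ l ∧ l < r ∧ ∀ t, 0 ≤ t → r * A t ≤ A (l * t) := by
  obtain ⟨c, hc, hA2⟩ := h
  have hd : 0 < c + r * (c - 2) := by nlinarith
  obtain ⟨l, hl⟩ : ∃ l, l = 2 * r * (c - 1) / (c + r * (c - 2)) := ⟨_, rfl⟩
  have hl₁ : 1 < l := by rw [hl, lt_div_iff₀ hd]; nlinarith
  have hlr : l < r := by
    rw [hl, div_lt_iff₀ hd]
    nlinarith [mul_pos (mul_pos (by linarith : 0 < r) (sub_pos.2 hr₁)) (sub_pos.2 hc)]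
  have hl₀ : 0 < l := by linarith
  refine ⟨l, hl₁.le, hlr, fun t ht => ?_⟩
  have hconv : l * A t ≤ (2 - l) * A (l * t) + 2 * (l - 1) * A (l * t / 2) := by
    have h := hA.convex.2 (mem_Ici.2 (by positivity : 0 ≤ l * t))
      (mem_Ici.2 (by positivity : 0 ≤ l * t / 2))
      (div_nonneg (by linarith) hl₀.le : 0 ≤ (2 - l) / l)
      (div_nonneg (by linarith) hl₀.le : 0 ≤ 2 * (l - 1) / l) (by field_simp; ring)
    have hcomb : (2 - l) / l * (l * t) + 2 * (l - 1) / l * (l * t / 2) = t := by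
      field_simp; ring
    simp only [smul_eq_mul, hcomb] at h
    rw [← le_div_iff₀' hl₀]
    convert h using 1
    field_simp
  have hhalf : c * A (l * t / 2) ≤ A (l * t) := by
    simpa [mul_div_cancel₀] using hA2 (l * t / 2) (by positivity)
  have hkey : r * (2 - l) * c + r * 2 * (l - 1) = l * c := by rw [hl]; field_simp; ring
  have hr₀ : 0 < r := by linarith
  refine le_of_mul_le_mul_left ?_ (by positivity : 0 < l * c)
  calc l * c * (r * A t) = r * c * (l * A t) := by ring
    _ ≤ r * c * ((2 - l) * A (l * t) + 2 * (l - 1) * A (l * t / 2)) := by gcongr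
    _ = r * (2 - l) * c * A (l * t) + 2 * r * (l - 1) * (c * A (l * t / 2)) := by ring
    _ ≤ r * (2 - l) * c * A (l * t) + 2 * r * (l - 1) * A (l * t) := by gcongr
    _ = l * c * A (l * t) := by rw [← hkey]; ring

theorem exists_scale_lt (hA : IsYoung A) (h : Nabla2Global A) {r : ℝ} (hr : 1 < r) :
    ∃ l, 1 ≤ l ∧ l < r ∧ ∀ t, 0 ≤ t → r * A t ≤ A (l * t) := by
  set r' := min r 2
  obtain ⟨l', hl'₁, hl'r, hscale⟩ :=
    h.exists_scale_lt_of_le_two hA (lt_min hr one_lt_two) (min_le_right r 2)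
  have hr' : 0 < r' := by positivity
  have hq : 1 ≤ r / r' := (one_le_div hr').2 (min_le_left r 2)
  refine ⟨r / r' * l', one_le_mul_of_one_le_of_one_le hq hl'₁, ?_, fun t ht => ?_⟩
  · calc r / r' * l' < r / r' * r' := by gcongr
      _ = r := div_mul_cancel₀ r hr'.ne'
  · calc r * A t = r / r' * (r' * A t) := by field_simp
      _ ≤ r / r' * A (l' * t) := by gcongr; exact hscale t ht
      _ ≤ A (r / r' * (l' * t)) := hA.mul_le_map_mul hq (by positivity)
      _ = A (r / r' * l' * t) := by rw [mul_assoc]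

end Nabla2Global

section Inverses

variable {A : ℝ → ℝ}

theorem einv_mono : Monotone (einv A) :=
  fun _ _ h => sInf_le_sInf fun _ hx => h.trans_lt hx

theorem einv_pos (hA : IsYoung A) {t : ℝ≥0∞} (ht : 0 < t) : 0 < einv A t := by
  obtain ⟨τ, -, hτ₀, hτt⟩ := ENNReal.lt_iff_exists_real_btwn.1 ht
  obtain ⟨η, hη, hAη⟩ := hA.exists_pos_forall_lt (ENNReal.ofReal_pos.1 hτ₀)
  refine (ENNReal.ofReal_pos.2 hη).trans_le (le_sInf fun x hx => ?_)
  by_contra! hxη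
  have hA_lt : ENNReal.ofReal (A x.toReal) < t :=
    (ENNReal.ofReal_le_ofReal (hAη _ ENNReal.toReal_nonneg
      (ENNReal.toReal_lt_of_lt_ofReal hxη)).le).trans_lt hτt
  exact hA_lt.not_gt hx

theorem einv_ofReal_mul_le {μ l : ℝ} (hμ : 0 < μ) (hl : 0 < l)
    (hscale : ∀ t, 0 ≤ t → μ * A t ≤ A (l * t)) (w : ℝ≥0∞) :
    einv A (ENNReal.ofReal μ * w) ≤ ENNReal.ofReal l * einv A w := by
  have hl₀ : ENNReal.ofReal l ≠ 0 := (ENNReal.ofReal_pos.2 hl).ne'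
  rw [mul_comm (ENNReal.ofReal l), ← ENNReal.div_le_iff hl₀ ENNReal.ofReal_ne_top]
  refine le_sInf fun x hx => ENNReal.div_le_of_le_mul' (sInf_le ?_)
  change ENNReal.ofReal μ * w < ENNReal.ofReal (A (ENNReal.ofReal l * x).toReal)
  rw [ENNReal.toReal_mul, ENNReal.toReal_ofReal hl.le]
  calc ENNReal.ofReal μ * w < ENNReal.ofReal μ * ENNReal.ofReal (A x.toReal) :=
        ENNReal.mul_lt_mul_right (ENNReal.ofReal_pos.2 hμ).ne' ENNReal.ofReal_ne_top hx
    _ ≤ ENNReal.ofReal (A (l * x.toReal)) := by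
        rw [← ENNReal.ofReal_mul hμ.le]
        exact ENNReal.ofReal_le_ofReal (hscale _ ENNReal.toReal_nonneg)

theorem rcInv_mono (hA : IsYoung A) : Monotone (rcInv A) := by
  intro t t' h
  obtain ⟨x, hx₀, hx⟩ := hA.exists_lt t'
  exact csInf_le_csInf ⟨0, fun s hs => hs.1⟩ ⟨x, hx₀, hx⟩ fun s hs => ⟨hs.1, h.trans_lt hs.2⟩

theorem rcInv_pos (hA : IsYoung A) {t : ℝ} (ht : 0 < t) : 0 < rcInv A t := by
  obtain ⟨η, hη, hAη⟩ := hA.exists_pos_forall_lt ht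
  obtain ⟨x, hx₀, hx⟩ := hA.exists_lt t
  refine hη.trans_le (le_csInf ⟨x, hx₀, hx⟩ fun s hs => ?_)
  by_contra! hsη
  exact (hAη s hs.1 hsη).not_gt hs.2

theorem conjE_mono : Monotone (conjE A) :=
  fun _ _ h => iSup_mono fun _ => tsub_le_tsub_right (mul_le_mul_left h _) _

theorem conjE_pos (h : Nabla2Global A) {y : ℝ≥0∞} (hy : 0 < y) : 0 < conjE A y := by
  obtain ⟨τ, -, hτ₀, hτy⟩ := ENNReal.lt_iff_exists_real_btwn.1 hy
  have hτ : 0 < τ := ENNReal.ofReal_pos.1 hτ₀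
  obtain ⟨t, ht, hAt⟩ := h.exists_pos_lt_mul hτ
  refine lt_of_lt_of_le (tsub_pos_of_lt ?_) (le_iSup_of_le (⟨t, ht.le⟩ : {s : ℝ // 0 ≤ s}) le_rfl)
  calc ENNReal.ofReal (A t) < ENNReal.ofReal (τ * t) :=
        (ENNReal.ofReal_lt_ofReal_iff (by positivity)).2 hAt
    _ ≤ y * ENNReal.ofReal t := by
        rw [ENNReal.ofReal_mul hτ.le]
        exact mul_le_mul_left hτy.le _

end Inverses

theorem sub_one_div_natCast_nonneg (n : ℕ) : 0 ≤ ((n : ℝ) - 1) / n := by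
  rcases n.eq_zero_or_pos with rfl | hn
  · simp
  · exact div_nonneg (sub_nonneg.2 (Nat.one_le_cast.2 hn)) n.cast_nonneg

theorem natCast_div_sub_one_nonneg (n : ℕ) : 0 ≤ (n : ℝ) / ((n : ℝ) - 1) := by
  rcases n.eq_zero_or_pos with rfl | hn
  · simp
  · exact div_nonneg n.cast_nonneg (sub_nonneg.2 (Nat.one_le_cast.2 hn))

theorem setLIntegral_Ioi_pos_of_le {f : ℝ → ℝ≥0∞} {b : ℝ} {C : ℝ≥0∞} (hC : 0 < C)
    (hf : ∀ r ∈ Ioc b (b + 1), C ≤ f r) : 0 < ∫⁻ r in Ioi b, f r := by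
  calc 0 < C * volume (Ioc b (b + 1)) := by simpa [Real.volume_Ioc] using hC
    _ = ∫⁻ _ in Ioc b (b + 1), C := (setLIntegral_const _ _).symm
    _ ≤ ∫⁻ r in Ioc b (b + 1), f r := setLIntegral_mono' measurableSet_Ioc hf
    _ ≤ ∫⁻ r in Ioi b, f r := lintegral_mono_set Ioc_subset_Ioi_self

section XiIntegral

variable {A N : ℝ → ℝ} {n : ℕ}

noncomputable def innerIntegral (N : ℝ → ℝ) (r : ℝ) : ℝ≥0∞ :=
  ∫⁻ ρ in Ioc (0 : ℝ) (1 / r), ENNReal.ofReal (rcInv N (1 / ρ))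

noncomputable def XiIntegral (A N : ℝ → ℝ) (n : ℕ) (s : ℝ) : ℝ≥0∞ :=
  ∫⁻ r in Ioi (s ^ (-(((n : ℝ) - 1) / n))),
    conjE A (ENNReal.ofReal r * innerIntegral N r) *
      ENNReal.ofReal (r ^ (-((n : ℝ) / ((n : ℝ) - 1) + 1)))

theorem Xi_eq_inv_mul (A N : ℝ → ℝ) (n : ℕ) (s : ℝ) :
    Xi A N n s = (ENNReal.ofReal s)⁻¹ * XiIntegral A N n s :=
  rfl

theorem innerIntegral_le_of_le {r r' : ℝ} (hr : 0 < r) (h : r ≤ r') :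
    innerIntegral N r' ≤ innerIntegral N r :=
  lintegral_mono_set (Ioc_subset_Ioc_right (one_div_le_one_div_of_le hr h))

theorem innerIntegral_pos (hN : IsYoung N) {r : ℝ} (hr : 0 < r) : 0 < innerIntegral N r := by
  calc 0 < ENNReal.ofReal (rcInv N r) * volume (Ioc (0 : ℝ) (1 / r)) :=
        ENNReal.mul_pos (ENNReal.ofReal_pos.2 (rcInv_pos hN hr)).ne' (by simp [hr])
    _ = ∫⁻ _ in Ioc (0 : ℝ) (1 / r), ENNReal.ofReal (rcInv N r) := (setLIntegral_const _ _).symm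
    _ ≤ innerIntegral N r := setLIntegral_mono' measurableSet_Ioc fun ρ hρ =>
        ENNReal.ofReal_le_ofReal (rcInv_mono hN ((le_one_div hr hρ.1).2 hρ.2))

theorem XiIntegral_mono {s₁ s₂ : ℝ} (h₁ : 0 < s₁) (h : s₁ ≤ s₂) :
    XiIntegral A N n s₁ ≤ XiIntegral A N n s₂ :=
  lintegral_mono_set (Ioi_subset_Ioi
    (Real.rpow_le_rpow_of_nonpos h₁ h (neg_nonpos.2 (sub_one_div_natCast_nonneg n))))

theorem XiIntegral_pos (hN : IsYoung N) (h : Nabla2Global A) {s : ℝ} (hs : 0 < s) :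
    0 < XiIntegral A N n s := by
  set b := s ^ (-(((n : ℝ) - 1) / n))
  have hb : 0 < b := Real.rpow_pos_of_pos hs _
  have hb₁ : 0 < b + 1 := by linarith
  refine setLIntegral_Ioi_pos_of_le (C := conjE A (ENNReal.ofReal b * innerIntegral N (b + 1)) *
    ENNReal.ofReal ((b + 1) ^ (-((n : ℝ) / ((n : ℝ) - 1) + 1)))) ?_ fun r hr => ?_
  · refine ENNReal.mul_pos (conjE_pos h ?_).ne'
      (ENNReal.ofReal_pos.2 (Real.rpow_pos_of_pos hb₁ _)).ne'
    exact ENNReal.mul_pos (ENNReal.ofReal_pos.2 hb).ne' (innerIntegral_pos hN hb₁).ne'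
  · have hr₀ : 0 < r := hb.trans hr.1
    refine mul_le_mul' (conjE_mono (mul_le_mul' (ENNReal.ofReal_le_ofReal hr.1.le)
      (innerIntegral_le_of_le hr₀ hr.2))) (ENNReal.ofReal_le_ofReal ?_)
    exact Real.rpow_le_rpow_of_nonpos hr₀ hr.2
      (neg_nonpos.2 (by linarith [natCast_div_sub_one_nonneg n]))

end XiIntegral

theorem mul_einv_inv_mul_le {A : ℝ → ℝ} {s₁ s₂ l : ℝ} (h₁ : 0 < s₁) (h₂ : 0 < s₂) (hl : 0 < l)
    (hscale : ∀ t, 0 ≤ t → s₂ / s₁ * A t ≤ A (l * t)) (w : ℝ≥0∞) :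
    ENNReal.ofReal s₁ * einv A ((ENNReal.ofReal s₁)⁻¹ * w) ≤
      ENNReal.ofReal (s₁ * l) * einv A ((ENNReal.ofReal s₂)⁻¹ * w) := by
  have hinv : (ENNReal.ofReal s₁)⁻¹ = ENNReal.ofReal (s₂ / s₁) * (ENNReal.ofReal s₂)⁻¹ := by
    rw [← ENNReal.ofReal_inv_of_pos h₁, ← ENNReal.ofReal_inv_of_pos h₂,
      ← ENNReal.ofReal_mul (div_pos h₂ h₁).le]
    congr 1
    field_simp
  rw [hinv, mul_assoc, ENNReal.ofReal_mul h₁.le, mul_assoc]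
  exact mul_le_mul_right (einv_ofReal_mul_le (div_pos h₂ h₁) hl hscale _) _

section Theta

variable {A N : ℝ → ℝ} {n : ℕ} {s₁ s₂ : ℝ}

theorem Theta_le_ofReal_mul_einv (h₁ : 0 < s₁) (h : s₁ ≤ s₂) :
    Theta A N n s₁ ≤ ENNReal.ofReal s₁ * einv A ((ENNReal.ofReal s₁)⁻¹ * XiIntegral A N n s₂) := by
  rw [Theta, Xi_eq_inv_mul]
  exact mul_le_mul_right (einv_mono (mul_le_mul_right (XiIntegral_mono h₁ h) _)) _

theorem Theta_le_of_le (hA : IsYoung A) (h₁ : 0 < s₁) (h : s₁ ≤ s₂) :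
    Theta A N n s₁ ≤ Theta A N n s₂ := by
  have h₂ := h₁.trans_le h
  calc Theta A N n s₁
      ≤ ENNReal.ofReal s₁ * einv A ((ENNReal.ofReal s₁)⁻¹ * XiIntegral A N n s₂) :=
        Theta_le_ofReal_mul_einv h₁ h
    _ ≤ ENNReal.ofReal (s₁ * (s₂ / s₁)) *
          einv A ((ENNReal.ofReal s₂)⁻¹ * XiIntegral A N n s₂) :=
        mul_einv_inv_mul_le h₁ h₂ (div_pos h₂ h₁)
          (fun t => hA.mul_le_map_mul (t := t) ((one_le_div h₁).2 h)) _
    _ = Theta A N n s₂ := by rw [mul_div_cancel₀ _ h₁.ne', Theta, Xi_eq_inv_mul]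

theorem Theta_lt_of_lt (hA : IsYoung A) (hN : IsYoung N) (hnabla : Nabla2Global A)
    (h₁ : 0 < s₁) (h : s₁ < s₂) (hfin : Theta A N n s₂ ≠ ⊤) :
    Theta A N n s₁ < Theta A N n s₂ := by
  have h₂ := h₁.trans h
  obtain ⟨l, hl, hlr, hscale⟩ := hnabla.exists_scale_lt hA ((one_lt_div h₁).2 h)
  set e := einv A ((ENNReal.ofReal s₂)⁻¹ * XiIntegral A N n s₂)
  have he : e ≠ 0 := (einv_pos hA (ENNReal.mul_pos (ENNReal.inv_ne_zero.2 ENNReal.ofReal_ne_top)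
    (XiIntegral_pos hN hnabla h₂).ne')).ne'
  have he' : e ≠ ⊤ := fun he' =>
    hfin (ENNReal.mul_eq_top.2 (Or.inl ⟨(ENNReal.ofReal_pos.2 h₂).ne', he'⟩))
  calc Theta A N n s₁
      ≤ ENNReal.ofReal s₁ * einv A ((ENNReal.ofReal s₁)⁻¹ * XiIntegral A N n s₂) :=
        Theta_le_ofReal_mul_einv h₁ h.le
    _ ≤ ENNReal.ofReal (s₁ * l) * e := mul_einv_inv_mul_le h₁ h₂ (by linarith) hscale _
    _ < ENNReal.ofReal s₂ * e :=
        ENNReal.mul_lt_mul_left he he'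
          ((ENNReal.ofReal_lt_ofReal_iff h₂).2 ((lt_div_iff₀' h₁).1 hlr))
    _ = Theta A N n s₂ := by rw [Theta, Xi_eq_inv_mul]

end Theta

theorem lintegral_Ioo_rpow_eq_top {b p : ℝ} (hb : 0 < b) (hp : p ≤ -1) :
    ∫⁻ x in Ioo 0 b, ENNReal.ofReal (x ^ p) = ⊤ := by
  by_contra h
  have hint := (lintegral_ofReal_ne_top_iff_integrable
    (measurable_id.pow_const p).aestronglyMeasurable
    (ae_restrict_of_forall_mem measurableSet_Ioo fun x hx => Real.rpow_nonneg hx.1.le p)).1 h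
  linarith [(intervalIntegral.integrableOn_Ioo_rpow_iff hb).1 hint]

section CondG

variable {A N : ℝ → ℝ} {n : ℕ}

theorem ofReal_rpow_mul_einv_Xi (a : ℝ) {s : ℝ} (hs : 0 < s) :
    ENNReal.ofReal (s ^ (-a)) * einv A (Xi A N n s) =
      ENNReal.ofReal (s ^ (-(a + 1))) * Theta A N n s := by
  rw [Theta, ← mul_assoc, ← ENNReal.ofReal_mul (Real.rpow_nonneg hs.le _),
    ← Real.rpow_add_one hs.ne']
  ring_nf

theorem exists_Theta_lt (hG : CondG A N n) {ε : ℝ≥0∞} (hε : ε ≠ 0) :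
    ∃ s > 0, Theta A N n s < ε := by
  obtain ⟨δ, hδ, hfin⟩ := hG
  by_contra! hge
  set a := ((n : ℝ) - 1) / n
  have hdiv : ∫⁻ s in Ioo 0 δ, ε * ENNReal.ofReal (s ^ (-(a + 1))) = ⊤ := by
    rw [lintegral_const_mul _ (by fun_prop),
      lintegral_Ioo_rpow_eq_top hδ (by linarith [sub_one_div_natCast_nonneg n]), ENNReal.mul_top hε]
  refine hfin.ne (top_le_iff.1 ?_)
  calc ⊤ = ∫⁻ s in Ioo 0 δ, ε * ENNReal.ofReal (s ^ (-(a + 1))) := hdiv.symm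
    _ ≤ ∫⁻ s in Ioo 0 δ, ENNReal.ofReal (s ^ (-a)) * einv A (Xi A N n s) :=
        setLIntegral_mono' measurableSet_Ioo fun s hs => by
          rw [ofReal_rpow_mul_einv_Xi a hs.1, mul_comm]
          exact mul_le_mul_right (hge s hs.1) _
    _ ≤ _ := lintegral_mono_set Ioo_subset_Ioc_self

end CondG

theorem Theta_tendsto_zero_and_strictMono_general (n : ℕ) (A N : ℝ → ℝ)
    (hA : IsYoung A) (hN : IsYoung N)
    (hnabla : Nabla2Global A) (hG : CondG A N n) :
    Filter.Tendsto (Theta A N n) (nhdsWithin 0 (Set.Ioi 0)) (nhds 0) ∧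
    ∃ sb > (0:ℝ), (∀ s ∈ Set.Ioo (0:ℝ) sb, Theta A N n s ≠ ⊤) ∧
      StrictMonoOn (Theta A N n) (Set.Ioo (0:ℝ) sb) := by
  obtain ⟨s₀, hs₀, hΘs₀⟩ := exists_Theta_lt hG one_ne_zero
  have hfin : ∀ s ∈ Ioo 0 s₀, Theta A N n s ≠ ⊤ := fun s hs =>
    ne_top_of_le_ne_top (hΘs₀.trans ENNReal.one_lt_top).ne (Theta_le_of_le hA hs.1 hs.2.le)
  refine ⟨ENNReal.tendsto_nhds_zero.2 fun ε hε => ?_, s₀, hs₀, hfin,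
    fun s₁ hs₁ s₂ hs₂ h => Theta_lt_of_lt hA hN hnabla hs₁.1 h (hfin s₂ hs₂)⟩
  obtain ⟨s, hs, hΘs⟩ := exists_Theta_lt hG hε.ne'
  filter_upwards [Ioo_mem_nhdsGT hs] with t ht
  exact (Theta_le_of_le hA ht.1 ht.2.le).trans hΘs.le

theorem Theta_tendsto_zero_and_strictMono (n : ℕ) (hn : 2 ≤ n) (A N : ℝ → ℝ)
    (hA : IsYoung A) (hN : IsYoung N)
    (hnabla : Nabla2Global A) (hG : CondG A N n) :
    Filter.Tendsto (Theta A N n) (nhdsWithin 0 (Set.Ioi 0)) (nhds 0) ∧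
    ∃ sb > (0:ℝ), (∀ s ∈ Set.Ioo (0:ℝ) sb, Theta A N n s ≠ ⊤) ∧
      StrictMonoOn (Theta A N n) (Set.Ioo (0:ℝ) sb) :=
  Theta_tendsto_zero_and_strictMono_general n A N hA hN hnabla hG
end
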